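/- Let n ≥ 1 and let J : ℝⁿ → (ℝⁿ →L[ℝ] ℝⁿ) be a twice continuously differentiable field of endomorphisms such that for every x: J(x)² = −id, J(x) is skew-adjoint with respect to the standard inner product, and the Nijenhuis expression vanishes: (DJ)(x)(J(x)u)(w) − (DJ)(x)(J(x)w)(u) − J(x)((DJ)(x)(u)(w)) + J(x)((DJ)(x)(w)(u)) = 0 for all u, w. Write J_k^l(x) = ⟨J(x) e_k, e_l⟩ for the components in the standard basis, ∂_p for the partial derivative in direction e_p, and use the summation convention with indices raised and lowered by the Euclidean metric. Define the vector field X by X^p = −J_t^p ∂^s J_s^t. Then for all x and all k, l, the Lie derivative of J along X, (L_X J)_k^l = J_p^l ∂_k X^p − J_k^p ∂_p X^l + X^p ∂_p J_k^l, satisfies (L_X J)_k^l = Δ J_k^l + Q(DJ)_k^l, where Δ J_k^l = ∑_s ∂_s ∂_s J_k^l and Q(DJ)_k^l = − J_k^p ∂^s J_i^l ∂_p J_s^i − J_i^l ∂^s J_k^p ∂_p J_s^i + J_s^p ∂^s J_i^l ∂_p J_k^i + J_i^l ∂^s J_s^p ∂_p J_k^i − J_p^l ∂_k J_t^p ∂^s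 J_s^t + J_k^p ∂_p J_t^l ∂^s J_s^t − J_t^p ∂^s J_s^t ∂_p J_k^l. (This is Proposition 3.2 of the paper — the evolution equation ∂J/∂t = ΔJ − [J, g⁻¹Rc] + Q(DJ) for the complex structure along the gauge-transformed pluriclosed flow — specialized to the flat Euclidean metric, where the Levi-Civita connection is the coordinate derivative and all curvature terms vanish.) -/

import Mathlib

open scoped RealInnerProductSpace

/-- Partial derivative in the direction of the `p`-th standard basis vector. -/
noncomputable def pd {n : ℕ} (p : Fin n)
    (f : EuclideanSpace ℝ (Fin n) → ℝ) (x : EuclideanSpace ℝ (Fin n)) : ℝ :=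
  fderiv ℝ f x (EuclideanSpace.single p 1)

/-- The component `J_k^l(x) = ⟨J(x) e_k, e_l⟩` of a field of endomorphisms. -/
noncomputable def Jc {n : ℕ}
    (J : EuclideanSpace ℝ (Fin n) → (EuclideanSpace ℝ (Fin n) →L[ℝ] EuclideanSpace ℝ (Fin n)))
    (k l : Fin n) (x : EuclideanSpace ℝ (Fin n)) : ℝ :=
  J x (EuclideanSpace.single k 1) l

/-- The components `X^p = - J_t^p ∂^s J_s^t` of the gauge vector field. -/
noncomputable def Xc {n : ℕ}
    (J : EuclideanSpace ℝ (Fin n) → (EuclideanSpace ℝ (Fin n) →L[ℝ] EuclideanSpace ℝ (Fin n)))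
    (p : Fin n) (x : EuclideanSpace ℝ (Fin n)) : ℝ :=
  - ∑ t, ∑ s, Jc J t p x * pd s (Jc J s t) x

/-!
Applying `J` to the Nijenhuis identity and using `J² = -1` gives, in components,
`∂_s J_k^l - ∂_k J_s^l = (J_k^p ∂_p J_s^i - J_s^p ∂_p J_k^i) J_i^l`. Taking `∂^s` of this identity
expresses `Δ J_k^l - ∂_k ∂^s J_s^l` by first-order terms plus `J_k^p J_t^l ∂_p ∂^s J_s^t`; the
term `J_s^p ∂^s ∂_p J_k^i` drops out because `J` is skew and second derivatives commute.
Expanding `L_X J` by the product rule produces the same two second-order terms, `∂_k ∂^s J_s^l`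
arising from `J_p^l J_t^p = -δ_t^l`, so the two computations combine to the claim.
-/

section pdCalculus

variable {n : ℕ} {f g : EuclideanSpace ℝ (Fin n) → ℝ} {x : EuclideanSpace ℝ (Fin n)} {p s : Fin n}

lemma pd_sub (hf : DifferentiableAt ℝ f x) (hg : DifferentiableAt ℝ g x) :
    pd p (fun y => f y - g y) x = pd p f x - pd p g x := by
  simp [pd, fderiv_fun_sub hf hg]

lemma pd_neg : pd p (fun y => -f y) x = -pd p f x := by
  simp [pd, fderiv_fun_neg]

lemma pd_mul (hf : DifferentiableAt ℝ f x) (hg : DifferentiableAt ℝ g x) :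
    pd p (fun y => f y * g y) x = pd p f x * g x + f x * pd p g x := by
  simp only [pd, fderiv_fun_mul hf hg, add_apply, smul_apply, smul_eq_mul]
  ring

lemma pd_sum {ι : Type*} (t : Finset ι) {F : ι → EuclideanSpace ℝ (Fin n) → ℝ}
    (hF : ∀ i ∈ t, DifferentiableAt ℝ (F i) x) :
    pd p (fun y => ∑ i ∈ t, F i y) x = ∑ i ∈ t, pd p (F i) x := by
  simp [pd, fderiv_fun_sum hF]

lemma contDiff_pd {k : WithTop ℕ∞} (hf : ContDiff ℝ (k + 1) f) : ContDiff ℝ k (pd p f) :=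
  (hf.fderiv_right le_rfl).clm_apply contDiff_const

lemma pd_pd_comm (hf : ContDiff ℝ 2 f) : pd s (pd p f) x = pd p (pd s f) x := by
  have hdf : Differentiable ℝ (fderiv ℝ f) :=
    (hf.fderiv_right (m := 1) le_rfl).differentiable one_ne_zero
  have hpd_pd : ∀ a b, pd a (pd b f) x =
      fderiv ℝ (fderiv ℝ f) x (EuclideanSpace.single a 1) (EuclideanSpace.single b 1) := by
    intro a b
    change fderiv ℝ (fun y => fderiv ℝ f y (EuclideanSpace.single b 1)) x _ = _
    simp [fderiv_clm_apply (hdf x) (differentiableAt_const _)]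
  rw [hpd_pd, hpd_pd]
  exact hf.contDiffAt.isSymmSndFDerivAt (by simp) _ _

end pdCalculus

lemma ContinuousLinearMap.apply_eq_sum_single {ι 𝕜 F : Type*} [Fintype ι] [DecidableEq ι]
    [RCLike 𝕜] [AddCommGroup F] [Module 𝕜 F] [TopologicalSpace F]
    (A : EuclideanSpace 𝕜 ι →L[𝕜] F) (v : EuclideanSpace 𝕜 ι) :
    A v = ∑ i, v i • A (EuclideanSpace.single i 1) := by
  conv_lhs => rw [← (EuclideanSpace.basisFun ι 𝕜).sum_repr v]
  simp [map_sum]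

lemma sub_eq_apply_of_nijenhuis {𝕜 E : Type*} [NontriviallyNormedField 𝕜]
    [NormedAddCommGroup E] [NormedSpace 𝕜 E] {A : E →L[𝕜] E} {B : E →L[𝕜] E →L[𝕜] E}
    (hA : A.comp A = -ContinuousLinearMap.id 𝕜 E)
    (hN : ∀ u w, B (A u) w - B (A w) u - A (B u w) + A (B w u) = 0) (u w : E) :
    B w u - B u w = A (B (A u) w - B (A w) u) := by
  have hAA : ∀ v, A (A v) = -v := fun v => by simpa using congrArg (· v) hA
  have h := congrArg A (hN u w)
  simp only [map_add, map_sub, hAA, map_zero] at h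
  rw [map_sub, ← sub_eq_zero, ← neg_eq_zero, ← h]
  abel

lemma sum_sum_mul_eq_zero_of_antisymm {ι R : Type*} [Fintype ι] [NonAssocRing R]
    [NoZeroDivisors R] [CharZero R] {a b : ι → ι → R} (ha : ∀ i j, a i j = -a j i)
    (hb : ∀ i j, b i j = b j i) : ∑ i, ∑ j, a i j * b i j = 0 := by
  refine CharZero.eq_neg_self_iff.mp ?_
  calc ∑ i, ∑ j, a i j * b i j = ∑ j, ∑ i, a i j * b i j := Finset.sum_comm
    _ = -∑ i, ∑ j, a i j * b i j := by
      simp only [← Finset.sum_neg_distrib]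
      exact Finset.sum_congr rfl fun j _ => Finset.sum_congr rfl fun i _ => by
        rw [ha i j, hb i j, neg_mul]

section components

variable {n : ℕ}
  {J : EuclideanSpace ℝ (Fin n) → (EuclideanSpace ℝ (Fin n) →L[ℝ] EuclideanSpace ℝ (Fin n))}

noncomputable def entryCLM (a b : Fin n) :
    (EuclideanSpace ℝ (Fin n) →L[ℝ] EuclideanSpace ℝ (Fin n)) →L[ℝ] ℝ :=
  (EuclideanSpace.proj b).comp (ContinuousLinearMap.apply ℝ _ (EuclideanSpace.single a 1))

lemma Jc_eq_entryCLM_comp (a b : Fin n) : Jc J a b = entryCLM a b ∘ J := rfl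

lemma contDiff_Jc {k : WithTop ℕ∞} (hJ : ContDiff ℝ k J) (a b : Fin n) :
    ContDiff ℝ k (Jc J a b) :=
  (entryCLM a b).contDiff.comp hJ

lemma pd_Jc (hJ : Differentiable ℝ J) (p a b : Fin n) (x : EuclideanSpace ℝ (Fin n)) :
    pd p (Jc J a b) x =
      fderiv ℝ J x (EuclideanSpace.single p 1) (EuclideanSpace.single a 1) b := by
  rw [pd, Jc_eq_entryCLM_comp, fderiv_comp x (entryCLM a b).differentiableAt (hJ x),
    ContinuousLinearMap.fderiv]
  rfl

lemma differentiable_Jc (hJ : ContDiff ℝ 2 J) (a b : Fin n) :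
    Differentiable ℝ (Jc J a b) :=
  (contDiff_Jc hJ a b).differentiable two_ne_zero

lemma differentiable_pd_Jc (hJ : ContDiff ℝ 2 J) (p a b : Fin n) :
    Differentiable ℝ (pd p (Jc J a b)) :=
  (contDiff_pd (k := 1) (contDiff_Jc hJ a b)).differentiable one_ne_zero

lemma sum_Jc_mul_Jc (hJ2 : ∀ x, (J x).comp (J x) = -ContinuousLinearMap.id ℝ _)
    (x : EuclideanSpace ℝ (Fin n)) (a b : Fin n) :
    ∑ p, Jc J a p x * Jc J p b x = -if a = b then 1 else 0 := by
  have h := congrArg (· (EuclideanSpace.single a 1) b) (hJ2 x)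
  simp only [ContinuousLinearMap.comp_apply, (J x).apply_eq_sum_single (J x _)] at h
  simpa [Jc, PiLp.single_apply, eq_comm] using h.symm

lemma Jc_eq_neg_Jc (hskew : ∀ x u v, ⟪J x u, v⟫ = -⟪u, J x v⟫) (x : EuclideanSpace ℝ (Fin n))
    (a b : Fin n) : Jc J a b x = -Jc J b a x := by
  simpa [Jc, EuclideanSpace.inner_single_left, EuclideanSpace.inner_single_right] using
    hskew x (EuclideanSpace.single a 1) (EuclideanSpace.single b 1)

lemma sum_Jc_mul_Jc_mul (hJ2 : ∀ x, (J x).comp (J x) = -ContinuousLinearMap.id ℝ _)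
    (x : EuclideanSpace ℝ (Fin n)) (l : Fin n) (c : Fin n → Fin n → ℝ) :
    ∑ p, ∑ t, ∑ s, Jc J p l x * Jc J t p x * c s t = -∑ s, c s l := by
  calc ∑ p, ∑ t, ∑ s, Jc J p l x * Jc J t p x * c s t
      = ∑ t, (∑ p, Jc J t p x * Jc J p l x) * ∑ s, c s t := by
        rw [Finset.sum_comm]
        simp only [Finset.sum_mul_sum, mul_comm (Jc J _ l x)]
    _ = -∑ s, c s l := by simp [sum_Jc_mul_Jc hJ2]

lemma pd_Jc_sub_pd_Jc (hJ : Differentiable ℝ J)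
    (hJ2 : ∀ x, (J x).comp (J x) = -ContinuousLinearMap.id ℝ _)
    (hN : ∀ x u w, fderiv ℝ J x (J x u) w - fderiv ℝ J x (J x w) u
        - J x (fderiv ℝ J x u w) + J x (fderiv ℝ J x w u) = 0)
    (x : EuclideanSpace ℝ (Fin n)) (k s l : Fin n) :
    pd s (Jc J k l) x - pd k (Jc J s l) x =
      ∑ p, ∑ i, (Jc J k p x * pd p (Jc J s i) x - Jc J s p x * pd p (Jc J k i) x)
        * Jc J i l x := by
  have h := congrArg (· l) (sub_eq_apply_of_nijenhuis (𝕜 := ℝ) (hJ2 x) (hN x)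
    (EuclideanSpace.single k 1) (EuclideanSpace.single s 1))
  rw [(J x).apply_eq_sum_single] at h
  simp only [(fderiv ℝ J x).apply_eq_sum_single (J x _)] at h
  simp only [PiLp.sub_apply, sum_apply, smul_apply,
    WithLp.ofLp_sum, WithLp.ofLp_smul, Finset.sum_apply, Pi.smul_apply, smul_eq_mul,
    pd_Jc hJ, Jc] at h ⊢
  rw [h, Finset.sum_comm]
  simp only [Finset.sum_mul, sub_mul, Finset.sum_sub_distrib]

lemma pd_pd_Jc_sub_pd_pd_Jc (hJ : ContDiff ℝ 2 J)
    (hJ2 : ∀ x, (J x).comp (J x) = -ContinuousLinearMap.id ℝ _)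
    (hN : ∀ x u w, fderiv ℝ J x (J x u) w - fderiv ℝ J x (J x w) u
        - J x (fderiv ℝ J x u w) + J x (fderiv ℝ J x w u) = 0)
    (x : EuclideanSpace ℝ (Fin n)) (k s l : Fin n) :
    pd s (pd s (Jc J k l)) x - pd s (pd k (Jc J s l)) x =
      ∑ p, ∑ i, (((pd s (Jc J k p) x * pd p (Jc J s i) x
            + Jc J k p x * pd s (pd p (Jc J s i)) x)
          - (pd s (Jc J s p) x * pd p (Jc J k i) x + Jc J s p x * pd s (pd p (Jc J k i)) x))
            * Jc J i l x
        + (Jc J k p x * pd p (Jc J s i) x - Jc J s p x * pd p (Jc J k i) x)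
            * pd s (Jc J i l) x) := by
  have hJc := differentiable_Jc hJ
  have hpdJc := differentiable_pd_Jc hJ
  have h := congrArg (pd s · x) (funext fun y =>
    pd_Jc_sub_pd_Jc (hJ.differentiable two_ne_zero) hJ2 hN y k s l)
  simpa (disch := fun_prop) only [pd_sub, pd_sum, pd_mul] using h

lemma laplacian_Jc_sub_pd_div_Jc (hJ : ContDiff ℝ 2 J)
    (hJ2 : ∀ x, (J x).comp (J x) = -ContinuousLinearMap.id ℝ _)
    (hskew : ∀ x u v, ⟪J x u, v⟫ = -⟪u, J x v⟫)
    (hN : ∀ x u w, fderiv ℝ J x (J x u) w - fderiv ℝ J x (J x w) u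
        - J x (fderiv ℝ J x u w) + J x (fderiv ℝ J x w u) = 0)
    (x : EuclideanSpace ℝ (Fin n)) (k l : Fin n) :
    ∑ s, pd s (pd s (Jc J k l)) x - ∑ s, pd k (pd s (Jc J s l)) x =
      (∑ p, ∑ s, ∑ i, Jc J k p x * pd s (Jc J i l) x * pd p (Jc J s i) x)
      + (∑ p, ∑ s, ∑ i, Jc J i l x * pd s (Jc J k p) x * pd p (Jc J s i) x)
      - (∑ p, ∑ s, ∑ i, Jc J s p x * pd s (Jc J i l) x * pd p (Jc J k i) x)
      - (∑ p, ∑ s, ∑ i, Jc J i l x * pd s (Jc J s p) x * pd p (Jc J k i) x)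
      + ∑ p, ∑ t, ∑ s, Jc J k p x * Jc J t l x * pd p (pd s (Jc J s t)) x := by
  have hvanish : ∑ p, ∑ s, ∑ i, Jc J s p x * pd s (pd p (Jc J k i)) x * Jc J i l x = 0 := by
    rw [Finset.sum_comm]
    simp only [mul_assoc, ← Finset.mul_sum]
    exact sum_sum_mul_eq_zero_of_antisymm (Jc_eq_neg_Jc hskew x) fun s p =>
      Finset.sum_congr rfl fun i _ => by rw [pd_pd_comm (contDiff_Jc hJ k i)]
  have hsecond : ∑ p, ∑ s, ∑ i, Jc J k p x * pd s (pd p (Jc J s i)) x * Jc J i l x =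
      ∑ p, ∑ t, ∑ s, Jc J k p x * Jc J t l x * pd p (pd s (Jc J s t)) x := by
    refine Finset.sum_congr rfl fun p _ => ?_
    rw [Finset.sum_comm]
    exact Finset.sum_congr rfl fun t _ => Finset.sum_congr rfl fun s _ => by
      rw [pd_pd_comm (contDiff_Jc hJ s t)]; ring
  have hdiv : ∑ s, pd k (pd s (Jc J s l)) x = ∑ s, pd s (pd k (Jc J s l)) x :=
    Finset.sum_congr rfl fun s _ => pd_pd_comm (contDiff_Jc hJ s l)
  rw [hdiv, ← Finset.sum_sub_distrib,
    Finset.sum_congr rfl fun s _ => pd_pd_Jc_sub_pd_pd_Jc hJ hJ2 hN x k s l, Finset.sum_comm,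
    ← hsecond]
  simp only [add_mul, sub_mul, Finset.sum_add_distrib, Finset.sum_sub_distrib]
  simp only [mul_comm, mul_left_comm] at hvanish ⊢
  linarith

lemma pd_Xc (hJ : ContDiff ℝ 2 J) (a p : Fin n) (x : EuclideanSpace ℝ (Fin n)) :
    pd a (Xc J p) x = -∑ t, ∑ s, (pd a (Jc J t p) x * pd s (Jc J s t) x
      + Jc J t p x * pd a (pd s (Jc J s t)) x) := by
  have hJc := differentiable_Jc hJ
  have hpdJc := differentiable_pd_Jc hJ
  unfold Xc
  simp (disch := fun_prop) only [pd_neg, pd_sum, pd_mul]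

lemma lieDeriv_Jc_eq (hJ : ContDiff ℝ 2 J)
    (hJ2 : ∀ x, (J x).comp (J x) = -ContinuousLinearMap.id ℝ _)
    (x : EuclideanSpace ℝ (Fin n)) (k l : Fin n) :
    (∑ p, Jc J p l x * pd k (Xc J p) x) - (∑ p, Jc J k p x * pd p (Xc J l) x)
        + ∑ p, Xc J p x * pd p (Jc J k l) x =
      ∑ s, pd k (pd s (Jc J s l)) x
      + (∑ p, ∑ t, ∑ s, Jc J k p x * Jc J t l x * pd p (pd s (Jc J s t)) x)
      - (∑ p, ∑ t, ∑ s, Jc J p l x * pd k (Jc J t p) x * pd s (Jc J s t) x)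
      + (∑ p, ∑ t, ∑ s, Jc J k p x * pd p (Jc J t l) x * pd s (Jc J s t) x)
      - ∑ p, ∑ t, ∑ s, Jc J t p x * pd s (Jc J s t) x * pd p (Jc J k l) x := by
  have hcontract := sum_Jc_mul_Jc_mul hJ2 x l fun s t => pd k (pd s (Jc J s t)) x
  simp only [pd_Xc hJ, Xc, mul_neg, neg_mul, Finset.mul_sum, Finset.sum_mul, mul_add,
    Finset.sum_add_distrib, Finset.sum_neg_distrib]
  simp only [mul_comm, mul_left_comm] at hcontract ⊢
  linarith

end components

theorem lie_deriv_J_eq_laplacian_add_Q_general {n : ℕ}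
    (J : EuclideanSpace ℝ (Fin n) → (EuclideanSpace ℝ (Fin n) →L[ℝ] EuclideanSpace ℝ (Fin n)))
    (hC2 : ContDiff ℝ 2 J)
    (hJ2 : ∀ x, (J x).comp (J x) = -ContinuousLinearMap.id ℝ (EuclideanSpace ℝ (Fin n)))
    (hskew : ∀ (x u v : EuclideanSpace ℝ (Fin n)), ⟪J x u, v⟫ = - ⟪u, J x v⟫)
    (hN : ∀ (x u w : EuclideanSpace ℝ (Fin n)),
      fderiv ℝ J x (J x u) w - fderiv ℝ J x (J x w) u
        - J x (fderiv ℝ J x u w) + J x (fderiv ℝ J x w u) = 0) :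
    ∀ (x : EuclideanSpace ℝ (Fin n)) (k l : Fin n),
      -- (L_X J)_k^l = J_p^l ∂_k X^p − J_k^p ∂_p X^l + X^p ∂_p J_k^l
      ((∑ p, Jc J p l x * pd k (Xc J p) x)
          - (∑ p, Jc J k p x * pd p (Xc J l) x)
          + ∑ p, Xc J p x * pd p (Jc J k l) x)
      = -- Δ J_k^l
        (∑ s, pd s (pd s (Jc J k l)) x)
        -- − J_k^p ∂^s J_i^l ∂_p J_s^i
        + (- (∑ p, ∑ s, ∑ i, Jc J k p x * pd s (Jc J i l) x * pd p (Jc J s i) x)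
        -- − J_i^l ∂^s J_k^p ∂_p J_s^i
          - (∑ p, ∑ s, ∑ i, Jc J i l x * pd s (Jc J k p) x * pd p (Jc J s i) x)
        -- + J_s^p ∂^s J_i^l ∂_p J_k^i
          + (∑ p, ∑ s, ∑ i, Jc J s p x * pd s (Jc J i l) x * pd p (Jc J k i) x)
        -- + J_i^l ∂^s J_s^p ∂_p J_k^i
          + (∑ p, ∑ s, ∑ i, Jc J i l x * pd s (Jc J s p) x * pd p (Jc J k i) x)
        -- − J_p^l ∂_k J_t^p ∂^s J_s^t
          - (∑ p, ∑ t, ∑ s, Jc J p l x * pd k (Jc J t p) x * pd s (Jc J s t) x)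
        -- + J_k^p ∂_p J_t^l ∂^s J_s^t
          + (∑ p, ∑ t, ∑ s, Jc J k p x * pd p (Jc J t l) x * pd s (Jc J s t) x)
        -- − J_t^p ∂^s J_s^t ∂_p J_k^l
          - ∑ p, ∑ t, ∑ s, Jc J t p x * pd s (Jc J s t) x * pd p (Jc J k l) x) := by
  intro x k l
  rw [lieDeriv_Jc_eq hC2 hJ2 x k l]
  linarith [laplacian_Jc_sub_pd_div_Jc hC2 hJ2 hskew hN x k l]

/-- Proposition 3.2 of the paper, specialized to the flat Euclidean metric:
for an integrable orthogonal complex structure field `J` on `ℝⁿ`, with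
`X^p = - J_t^p ∂^s J_s^t`, the Lie derivative of `J` along `X` equals
`Δ J + Q(DJ)` componentwise. -/
theorem lie_deriv_J_eq_laplacian_add_Q {n : ℕ} (hn : 1 ≤ n)
    (J : EuclideanSpace ℝ (Fin n) → (EuclideanSpace ℝ (Fin n) →L[ℝ] EuclideanSpace ℝ (Fin n)))
    (hC2 : ContDiff ℝ 2 J)
    (hJ2 : ∀ x, (J x).comp (J x) = -ContinuousLinearMap.id ℝ (EuclideanSpace ℝ (Fin n)))
    (hskew : ∀ (x u v : EuclideanSpace ℝ (Fin n)), ⟪J x u, v⟫ = - ⟪u, J x v⟫)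
    (hN : ∀ (x u w : EuclideanSpace ℝ (Fin n)),
      fderiv ℝ J x (J x u) w - fderiv ℝ J x (J x w) u
        - J x (fderiv ℝ J x u w) + J x (fderiv ℝ J x w u) = 0) :
    ∀ (x : EuclideanSpace ℝ (Fin n)) (k l : Fin n),
      -- (L_X J)_k^l = J_p^l ∂_k X^p − J_k^p ∂_p X^l + X^p ∂_p J_k^l
      ((∑ p, Jc J p l x * pd k (Xc J p) x)
          - (∑ p, Jc J k p x * pd p (Xc J l) x)
          + ∑ p, Xc J p x * pd p (Jc J k l) x)
      = -- Δ J_k^l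
        (∑ s, pd s (pd s (Jc J k l)) x)
        -- − J_k^p ∂^s J_i^l ∂_p J_s^i
        + (- (∑ p, ∑ s, ∑ i, Jc J k p x * pd s (Jc J i l) x * pd p (Jc J s i) x)
        -- − J_i^l ∂^s J_k^p ∂_p J_s^i
          - (∑ p, ∑ s, ∑ i, Jc J i l x * pd s (Jc J k p) x * pd p (Jc J s i) x)
        -- + J_s^p ∂^s J_i^l ∂_p J_k^i
          + (∑ p, ∑ s, ∑ i, Jc J s p x * pd s (Jc J i l) x * pd p (Jc J k i) x)
        -- + J_i^l ∂^s J_s^p ∂_p J_k^i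
          + (∑ p, ∑ s, ∑ i, Jc J i l x * pd s (Jc J s p) x * pd p (Jc J k i) x)
        -- − J_p^l ∂_k J_t^p ∂^s J_s^t
          - (∑ p, ∑ t, ∑ s, Jc J p l x * pd k (Jc J t p) x * pd s (Jc J s t) x)
        -- + J_k^p ∂_p J_t^l ∂^s J_s^t
          + (∑ p, ∑ t, ∑ s, Jc J k p x * pd p (Jc J t l) x * pd s (Jc J s t) x)
        -- − J_t^p ∂^s J_s^t ∂_p J_k^l
          - ∑ p, ∑ t, ∑ s, Jc J t p x * pd s (Jc J s t) x * pd p (Jc J k l) x) :=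
  lie_deriv_J_eq_laplacian_add_Q_general J hC2 hJ2 hskew hN
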